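/- The compensated damping matrix Ĉ = C + Δt Ĉ₁ + Δt² Ĉ₂ with Ĉ₁ = (γ − 1/2)(CM⁻¹C − K) and Ĉ₂ = ((γ−1/2)² − 1/12)CM⁻¹CM⁻¹C − (γ² − γ/2 − β + 1/12)KM⁻¹C + (1/12)CM⁻¹K satisfies the compensation condition through second order: C = Ĉ + B̂(Δt,γ)(K − ĈM⁻¹Ĉ) + Δt²(η − 1/12)KM⁻¹Ĉ + O(Δt³), where B̂(Δt,γ) = Δt(γ−1/2)I − Δt²((γ−1/2)² + 1/12)ĈM⁻¹ and η = γ/2 − β − 1/12; that is, the coefficients of Δt⁰, Δt¹ and Δt² on the right-hand side equal C, 0, 0 respectively. -/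
import Mathlib


open Polynomial in
private lemma mc0 {R : Type*} [Semiring R] (p q : R[X]) :
    (p*q).coeff 0 = p.coeff 0 * q.coeff 0 := by
  simp [Polynomial.coeff_mul, Finset.Nat.sum_antidiagonal_eq_sum_range_succ_mk]

open Polynomial in
private lemma mc1 {R : Type*} [Semiring R] (p q : R[X]) :
    (p*q).coeff 1 = p.coeff 0 * q.coeff 1 + p.coeff 1 * q.coeff 0 := by
  simp [Polynomial.coeff_mul, Finset.Nat.sum_antidiagonal_eq_sum_range_succ_mk,
    Finset.sum_range_succ]

open Polynomial in
private lemma mc2 {R : Type*} [Semiring R] (p q : R[X]) :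
    (p*q).coeff 2 = p.coeff 0 * q.coeff 2 + p.coeff 1 * q.coeff 1 + p.coeff 2 * q.coeff 0 := by
  simp [Polynomial.coeff_mul, Finset.Nat.sum_antidiagonal_eq_sum_range_succ_mk,
    Finset.sum_range_succ, add_assoc]

open Polynomial in
set_option maxHeartbeats 2000000 in
open Polynomial in
/-- The compensated damping matrix `Ĉ = C + ΔtĈ₁ + Δt²Ĉ₂` with
`Ĉ₁ = (γ − 1/2)(CM⁻¹C − K)` and
`Ĉ₂ = ((γ−1/2)² − 1/12)CM⁻¹CM⁻¹C − (γ² − γ/2 − β + 1/12)KM⁻¹C + (1/12)CM⁻¹K`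
satisfies the compensation condition
`C = Ĉ + B̂(Δt,γ)(K − ĈM⁻¹Ĉ) + Δt²(η − 1/12)KM⁻¹Ĉ + O(Δt³)`: expanding the
right-hand side as a polynomial in `Δt`, its coefficients at `Δt⁰, Δt¹, Δt²`
are `C`, `0`, `0`. -/
theorem newmark_damping_compensation (n : ℕ)
    (M C K : Matrix (Fin n) (Fin n) ℝ) (hM : IsUnit M) (γ β : ℝ) :
    (let Mi := M⁻¹
     let C1 : Matrix (Fin n) (Fin n) ℝ := (γ - 1 / 2) • (C * Mi * C - K)
     let C2 : Matrix (Fin n) (Fin n) ℝ :=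
       ((γ - 1 / 2) ^ 2 - 1 / 12) • (C * Mi * C * Mi * C)
         - (γ ^ 2 - γ / 2 - β + 1 / 12) • (K * Mi * C)
         + (1 / 12 : ℝ) • (C * Mi * K)
     let Chat : Polynomial (Matrix (Fin n) (Fin n) ℝ) :=
       Polynomial.C C + Polynomial.C C1 * Polynomial.X
         + Polynomial.C C2 * Polynomial.X ^ 2
     let Bhat : Polynomial (Matrix (Fin n) (Fin n) ℝ) :=
       (γ - 1 / 2) • (Polynomial.X : Polynomial (Matrix (Fin n) (Fin n) ℝ))
         - ((γ - 1 / 2) ^ 2 + 1 / 12) •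
             (Polynomial.X ^ 2 * (Chat * Polynomial.C Mi))
     let η : ℝ := γ / 2 - β - 1 / 12
     let RHS : Polynomial (Matrix (Fin n) (Fin n) ℝ) :=
       Chat + Bhat * (Polynomial.C K - Chat * Polynomial.C Mi * Chat)
         + (η - 1 / 12) •
             (Polynomial.X ^ 2 * (Polynomial.C K * Polynomial.C Mi * Chat))
     RHS.coeff 0 = C ∧ RHS.coeff 1 = 0 ∧ RHS.coeff 2 = 0) := by
  intro Mi C1 C2 Chat Bhat η RHS
  have hC0 : Chat.coeff 0 = C := by simp [Chat]
  have hC1 : Chat.coeff 1 = C1 := by simp [Chat]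
  have hC2 : Chat.coeff 2 = C2 := by simp [Chat, Polynomial.coeff_X_pow]
  have hB0 : Bhat.coeff 0 = 0 := by
    simp [Bhat, mc0, hC0]
  have hB1 : Bhat.coeff 1 = (γ - 1 / 2) • (1 : Matrix (Fin n) (Fin n) ℝ) := by
    rw [show Bhat = (γ - 1 / 2) • (Polynomial.X : Polynomial (Matrix (Fin n) (Fin n) ℝ))
         - ((γ - 1 / 2) ^ 2 + 1 / 12) •
             (Polynomial.X ^ 2 * (Chat * Polynomial.C Mi)) from rfl,
      Polynomial.coeff_sub, Polynomial.coeff_smul, Polynomial.coeff_smul, mc1,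
      Polynomial.coeff_X_one, Polynomial.coeff_X_pow]
    norm_num [Polynomial.coeff_X]
  have hB2 : Bhat.coeff 2 = -(((γ - 1 / 2) ^ 2 + 1 / 12) • (C * Mi)) := by
    simp [Bhat, mc2, mc0, mc1, hC0, hC1, hC2, Polynomial.coeff_smul, Polynomial.coeff_X_pow,
      Polynomial.coeff_X]
  have hD0 : (Polynomial.C K - Chat * Polynomial.C Mi * Chat).coeff 0 = K - C * Mi * C := by
    simp [mc0, hC0]
  have hD1 : (Polynomial.C K - Chat * Polynomial.C Mi * Chat).coeff 1
      = -(C * Mi * C1 + C1 * Mi * C) := by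
    simp [mc1, mc0, hC0, hC1]
  have h0 : RHS.coeff 0 = C := by
    simp [RHS, mc0, hC0, hB0, Polynomial.coeff_smul]
  have h1 : RHS.coeff 1 = 0 := by
    rw [show RHS = Chat + Bhat * (Polynomial.C K - Chat * Polynomial.C Mi * Chat)
         + (η - 1 / 12) •
             (Polynomial.X ^ 2 * (Polynomial.C K * Polynomial.C Mi * Chat)) from rfl]
    rw [Polynomial.coeff_add, Polynomial.coeff_add, mc1, hB0, hB1, hD0, hC1,
      Polynomial.coeff_smul, mc1]
    simp only [Polynomial.coeff_X_pow, Polynomial.coeff_X, C1]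
    norm_num
    simp [smul_sub, Matrix.smul_mul]
  have h2 : RHS.coeff 2 = 0 := by
    rw [show RHS = Chat + Bhat * (Polynomial.C K - Chat * Polynomial.C Mi * Chat)
         + (η - 1 / 12) •
             (Polynomial.X ^ 2 * (Polynomial.C K * Polynomial.C Mi * Chat)) from rfl]
    rw [Polynomial.coeff_add, Polynomial.coeff_add, mc2, hB0, hB1, hB2, hD0, hD1, hC2,
      Polynomial.coeff_smul, mc2]
    simp only [Polynomial.coeff_X_pow, mc0]
    norm_num
    rw [hC0]
    simp only [C1, C2, η]
    simp only [Matrix.smul_mul, Matrix.mul_smul, smul_smul, smul_sub, smul_add, sub_mul,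
      mul_sub, add_mul, mul_add, neg_sub, neg_add, neg_neg, smul_neg, neg_smul,
      Matrix.one_mul, Matrix.mul_one, mul_assoc]
    module
  exact ⟨h0, h1, h2⟩
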